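/- arXiv:2312.05540 — 4 statements merged into one kernel-verified Lean document; each statement's English description precedes it below -/
import Mathlib

section
/- For a nonnegative matrix A ∈ ℝ^{d×d}, tr(e^A) ≥ d, with equality if and only if A^k has zero trace (i.e., zero diagonal) for all k ≥ 1. -/
open Matrix

theorem trace_exp_ge_card_of_nonneg {d : ℕ} (A : Matrix (Fin d) (Fin d) ℝ)
    (hA : ∀ i j, 0 ≤ A i j) :
    (d : ℝ) ≤ (NormedSpace.exp A).trace ∧
      ((NormedSpace.exp A).trace = d ↔ ∀ k : ℕ, 1 ≤ k → (A ^ k).trace = 0) := by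
  letI : SeminormedRing (Matrix (Fin d) (Fin d) ℝ) := Matrix.linftyOpSemiNormedRing
  letI : NormedRing (Matrix (Fin d) (Fin d) ℝ) := Matrix.linftyOpNormedRing
  letI : NormedAlgebra ℝ (Matrix (Fin d) (Fin d) ℝ) := Matrix.linftyOpNormedAlgebra
  -- entrywise nonnegativity of powers
  have hpow : ∀ k : ℕ, ∀ i j, 0 ≤ (A ^ k) i j := by
    intro k
    induction k with
    | zero => intro i j; simp [Matrix.one_apply]; positivity
    | succ n ih =>
      intro i j
      rw [pow_succ, Matrix.mul_apply]
      exact Finset.sum_nonneg fun l _ => mul_nonneg (ih i l) (hA l j)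
  have htr : ∀ k : ℕ, 0 ≤ (A ^ k).trace := fun k =>
    Finset.sum_nonneg fun i _ => hpow k i i
  set f : ℕ → ℝ := fun n => (Nat.factorial n : ℝ)⁻¹ * (A ^ n).trace with hf
  have hfnonneg : ∀ n, 0 ≤ f n := fun n =>
    mul_nonneg (by positivity) (htr n)
  have hsummable : Summable fun n : ℕ => (Nat.factorial n : ℝ)⁻¹ • A ^ n :=
    NormedSpace.expSeries_summable' (𝕂 := ℝ) A
  have hcont : Continuous (Matrix.trace : Matrix (Fin d) (Fin d) ℝ → ℝ) := by
    have : Continuous fun M : Matrix (Fin d) (Fin d) ℝ => ∑ i, M i i :=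
      continuous_finset_sum _ fun i _ =>
        (continuous_apply (A := fun _ : Fin d => ℝ) i).comp
          (continuous_apply (A := fun _ : Fin d => Fin d → ℝ) i)
    exact this
  have hsumf : Summable f := by
    have := hsummable.map (Matrix.traceLinearMap (Fin d) ℝ ℝ) hcont
    exact this.congr fun n => by simp [hf, Matrix.trace_smul, smul_eq_mul]
  have hexp : (NormedSpace.exp A).trace = ∑' n, f n := by
    rw [NormedSpace.exp_eq_tsum (𝕂 := ℝ)]
    have := hsummable.hasSum.map (Matrix.traceLinearMap (Fin d) ℝ ℝ) hcont
    simpa [hf, Matrix.trace_smul, smul_eq_mul] using this.tsum_eq.symm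
  have hf0 : f 0 = d := by simp [hf]
  have hsplit : ∑' n, f n = f 0 + ∑' n, f (n + 1) := hsumf.tsum_eq_zero_add
  have hsumf1 : Summable fun n => f (n + 1) := by
    exact (summable_nat_add_iff 1).mpr hsumf
  have hrest : 0 ≤ ∑' n, f (n + 1) := tsum_nonneg fun n => hfnonneg _
  constructor
  · rw [hexp, hsplit, hf0]; linarith
  · rw [hexp, hsplit, hf0]
    constructor
    · intro h k hk
      have hzero : ∑' n, f (n + 1) = 0 := by linarith
      obtain ⟨m, rfl⟩ := Nat.exists_eq_add_of_le hk
      have hle : f (1 + m) ≤ ∑' n, f (n + 1) := by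
        have := Summable.le_tsum hsumf1 m (fun j _ => hfnonneg _)
        simpa [Nat.add_comm] using this
      have : f (1 + m) = 0 := le_antisymm (hzero ▸ hle) (hfnonneg _)
      have hfac : (Nat.factorial (1 + m) : ℝ)⁻¹ ≠ 0 := by positivity
      simp only [hf] at this
      exact (mul_eq_zero.mp this).resolve_left hfac
    · intro h
      have : ∀ n : ℕ, f (n + 1) = 0 := by
        intro n
        simp [hf, h (n + 1) (Nat.succ_le_succ (Nat.zero_le n))]
      rw [tsum_congr this, tsum_zero, add_zero]
end

section
/- A matrix W ∈ ℝ^{d×d} satisfies tr(e^{W∘W}) = d if and only if the directed graph with edge (i,j) whenever W_{ij} ≠ 0 is acyclic. -/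
open Matrix
open scoped Matrix

/-- The digraph on `Fin d` with edge relation `E` contains a directed cycle:
a closed walk of length `m ≥ 1`. -/
def HasDirectedCycle {d : ℕ} (E : Fin d → Fin d → Prop) : Prop :=
  ∃ (m : ℕ) (v : Fin (m + 1) → Fin d), 1 ≤ m ∧ v 0 = v (Fin.last m) ∧
    ∀ t : Fin m, E (v t.castSucc) (v t.succ)

namespace NotearsAux

variable {d : ℕ}

lemma pow_entry_nonneg {A : Matrix (Fin d) (Fin d) ℝ} (hA : ∀ i j, 0 ≤ A i j)
    (n : ℕ) (i j : Fin d) : 0 ≤ (A ^ n) i j := by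
  induction n generalizing i j with
  | zero =>
    simp only [pow_zero]
    by_cases h : i = j <;> simp [Matrix.one_apply, h]
  | succ n ih =>
    rw [pow_succ, Matrix.mul_apply]
    exact Finset.sum_nonneg fun k _ => mul_nonneg (ih i k) (hA k j)

lemma walk_pos {A : Matrix (Fin d) (Fin d) ℝ} (hA : ∀ i j, 0 ≤ A i j)
    (n : ℕ) (v : ℕ → Fin d) (hv : ∀ t < n, 0 < A (v t) (v (t + 1))) :
    0 < (A ^ n) (v 0) (v n) := by
  induction n with
  | zero => simp [Matrix.one_apply]
  | succ n ih =>
    rw [pow_succ, Matrix.mul_apply]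
    have h1 : 0 < (A ^ n) (v 0) (v n) * A (v n) (v (n + 1)) :=
      mul_pos (ih fun t ht => hv t (ht.trans (Nat.lt_succ_self n)))
        (hv n (Nat.lt_succ_self n))
    refine lt_of_lt_of_le h1 ?_
    exact Finset.single_le_sum
      (fun k _ => mul_nonneg (pow_entry_nonneg hA n _ k) (hA k _))
      (Finset.mem_univ (v n))

lemma walk_exists {A : Matrix (Fin d) (Fin d) ℝ}
    (n : ℕ) (i j : Fin d) (h : (A ^ n) i j ≠ 0) :
    ∃ v : ℕ → Fin d, v 0 = i ∧ v n = j ∧ ∀ t < n, A (v t) (v (t + 1)) ≠ 0 := by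
  induction n generalizing i with
  | zero =>
    have hij : i = j := by
      by_contra hne
      simp [pow_zero, Matrix.one_apply, hne] at h
    exact ⟨fun _ => j, by rw [hij], rfl, fun t ht => absurd ht (Nat.not_lt_zero t)⟩
  | succ n ih =>
    rw [pow_succ', Matrix.mul_apply] at h
    obtain ⟨k, -, hk⟩ := Finset.exists_ne_zero_of_sum_ne_zero h
    have hAik : A i k ≠ 0 := fun h0 => hk (by rw [h0, zero_mul])
    have hkj : (A ^ n) k j ≠ 0 := fun h0 => hk (by rw [h0, mul_zero])
    obtain ⟨v, hv0, hvn, hve⟩ := ih k hkj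
    refine ⟨fun t => if t = 0 then i else v (t - 1), by simp, by simp [hvn], ?_⟩
    intro t ht
    cases t with
    | zero => simpa [hv0] using hAik
    | succ t => simpa using hve t (Nat.lt_of_succ_lt_succ ht)

end NotearsAux

theorem notears_acyclicity_characterization {d : ℕ} (W : Matrix (Fin d) (Fin d) ℝ) :
    (NormedSpace.exp (W ⊙ W)).trace = d ↔
      ¬ HasDirectedCycle (fun i j => W i j ≠ 0) := by
  classical
  set A := W ⊙ W with hAdef
  have hA : ∀ i j, 0 ≤ A i j := fun i j => mul_self_nonneg (W i j)
  have hApos : ∀ i j, W i j ≠ 0 → 0 < A i j := fun i j h =>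
    lt_of_le_of_ne (hA i j) (Ne.symm (mul_ne_zero h h))
  have hAzero : ∀ i j, A i j ≠ 0 → W i j ≠ 0 := by
    intro i j h hW
    exact h (by simp [hAdef, Matrix.hadamard_apply, hW])
  -- norm instances
  letI : SeminormedRing (Matrix (Fin d) (Fin d) ℝ) := Matrix.linftyOpSemiNormedRing
  letI : NormedRing (Matrix (Fin d) (Fin d) ℝ) := Matrix.linftyOpNormedRing
  letI : NormedAlgebra ℝ (Matrix (Fin d) (Fin d) ℝ) := Matrix.linftyOpNormedAlgebra
  have hsum : Summable fun n : ℕ => ((n.factorial : ℝ))⁻¹ • A ^ n :=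
    NormedSpace.expSeries_summable' (𝕂 := ℝ) A
  -- trace commutes with the sum
  have htraceCont : Continuous (Matrix.trace : Matrix (Fin d) (Fin d) ℝ → ℝ) :=
    LinearMap.continuous_of_finiteDimensional (Matrix.traceLinearMap (Fin d) ℝ ℝ)
  have hmap : (NormedSpace.exp A).trace
      = ∑' n : ℕ, ((n.factorial : ℝ))⁻¹ * (A ^ n).trace := by
    have h := (hsum.hasSum.map (Matrix.traceLinearMap (Fin d) ℝ ℝ) htraceCont).tsum_eq
    simp only [Function.comp_def, Matrix.traceLinearMap, LinearMap.coe_mk, AddHom.coe_mk, Matrix.trace_smul,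
      smul_eq_mul] at h
    rw [NormedSpace.exp_eq_tsum (𝕂 := ℝ)]
    exact h.symm
  set f : ℕ → ℝ := fun n => ((n.factorial : ℝ))⁻¹ * (A ^ n).trace with hf
  have hfsum : Summable f := by
    have h := hsum.map (Matrix.traceLinearMap (Fin d) ℝ ℝ) htraceCont
    simpa only [Function.comp_def, Matrix.traceLinearMap, LinearMap.coe_mk, AddHom.coe_mk, Matrix.trace_smul,
      smul_eq_mul] using h
  have hf0 : f 0 = d := by simp [hf, Matrix.trace_one]
  have hfnonneg : ∀ n, 0 ≤ f n := fun n =>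
    mul_nonneg (by positivity) (Finset.sum_nonneg fun i _ =>
      NotearsAux.pow_entry_nonneg hA n i i)
  have hsplit : (NormedSpace.exp A).trace = d + ∑' n : ℕ, f (n + 1) := by
    rw [hmap, Summable.tsum_eq_zero_add hfsum, hf0]
  have hfshift : Summable fun n => f (n + 1) := by
    exact (summable_nat_add_iff 1).mpr hfsum
  rw [hsplit]
  constructor
  · -- trace = d → no cycle
    intro h hcyc
    obtain ⟨m, v, hm, hvc, hve⟩ := hcyc
    have htail : ∑' n : ℕ, f (n + 1) = 0 := by linarith
    have hall : ∀ n, f (n + 1) = 0 := by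
      intro n
      by_contra hne
      have hpos : 0 < f (n + 1) := lt_of_le_of_ne (hfnonneg _) (Ne.symm hne)
      have : 0 < ∑' n : ℕ, f (n + 1) :=
        Summable.tsum_pos hfshift (fun k => hfnonneg (k + 1)) n hpos
      linarith
    -- construct positive trace from cycle
    obtain ⟨m', rfl⟩ : ∃ m', m = m' + 1 := ⟨m - 1, (Nat.succ_pred_eq_of_pos hm).symm⟩
    set u : ℕ → Fin d := fun t => if h : t < m' + 2 then v ⟨t, h⟩ else v 0 with hu
    have hedge : ∀ t < m' + 1, 0 < A (u t) (u (t + 1)) := by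
      intro t ht
      have h1 : t < m' + 2 := ht.trans (Nat.lt_succ_self _)
      have h2 : t + 1 < m' + 2 := Nat.succ_lt_succ ht
      have := hve ⟨t, ht⟩
      simp only [Fin.castSucc, Fin.succ] at this
      apply hApos
      simpa [hu, h1, h2, Fin.castSucc, Fin.succ] using this
    have hpos : 0 < (A ^ (m' + 1)) (u 0) (u (m' + 1)) :=
      NotearsAux.walk_pos hA (m' + 1) u hedge
    have hu0 : u 0 = v 0 := by simp [hu]
    have hum : u (m' + 1) = v (Fin.last (m' + 1)) := by
      simp [hu, Fin.last]
    rw [hu0, hum, ← hvc] at hpos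
    have htr : 0 < (A ^ (m' + 1)).trace := by
      refine lt_of_lt_of_le hpos ?_
      exact Finset.single_le_sum
        (fun i _ => NotearsAux.pow_entry_nonneg hA (m' + 1) i i)
        (Finset.mem_univ (v 0))
    have : f (m' + 1) = 0 := hall m'
    rw [hf] at this
    have hfac : ((Nat.factorial (m' + 1) : ℝ))⁻¹ > 0 := by positivity
    nlinarith
  · -- no cycle → trace = d
    intro hnc
    have hall : ∀ n, f (n + 1) = 0 := by
      intro n
      rw [hf]
      simp only
      rcases eq_or_ne ((A ^ (n + 1)).trace) 0 with h | h
      · rw [h, mul_zero]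
      · exfalso
        have : ∃ i : Fin d, (A ^ (n + 1)) i i ≠ 0 := by
          by_contra hno
          push_neg at hno
          exact h (by simp [Matrix.trace, Matrix.diag, hno])
        obtain ⟨i, hi⟩ := this
        obtain ⟨v, hv0, hvn, hve⟩ := NotearsAux.walk_exists (n + 1) i i hi
        refine hnc ⟨n + 1, fun t => v t, Nat.succ_le_succ (Nat.zero_le n), ?_, ?_⟩
        · simp [Fin.last, hv0, hvn]
        · intro t
          exact hAzero _ _ (by simpa [Fin.castSucc, Fin.succ] using hve t t.isLt)
    have : ∑' n : ℕ, f (n + 1) = 0 := by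
      rw [tsum_congr hall, tsum_zero]
    rw [this, add_zero]
end

section
/- The gradient of h(W) = tr(e^{W∘W}) − d with respect to W is ∇h(W) = (e^{W∘W})^T ∘ (2W). -/
/-!
Along the line `t ↦ W + t E_ij` the Hadamard square moves along the parabola
`W ∘ W + (2 W_ij t + t²) E_ij`, so by the chain rule it suffices to differentiate
`t ↦ tr e^{A + tB}` at `0`. Termwise, cyclicity of the trace turns the derivative of
`tr (A + tB)ⁿ` into `n tr ((A + tB)ⁿ⁻¹ B)`. For `|t| ≤ 1` these are dominated by
`‖tr‖ ‖B‖ n (‖A‖ + ‖B‖)ⁿ⁻¹ / n!`, a summable sequence, so the series may be differentiated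
termwise, and the derivatives sum to `tr (e^A B)`; for `B = E_ij` this is `(e^A)_ji`.
-/

open Matrix
open scoped Matrix

/-- NOTEARS acyclicity penalty. -/
noncomputable def hAcy {d : ℕ} (W : Matrix (Fin d) (Fin d) ℝ) : ℝ :=
  (NormedSpace.exp (W ⊙ W)).trace - d

open scoped Nat

theorem hasSum_inv_factorial_mul_nat_mul_iff {f : ℕ → ℝ} {a : ℝ} :
    HasSum (fun n => (n ! : ℝ)⁻¹ * (n * f (n - 1))) a ↔ HasSum (fun n => (n ! : ℝ)⁻¹ * f n) a := by
  have hshift : (fun n : ℕ => ((n + 1)! : ℝ)⁻¹ * ((n + 1 : ℕ) * f (n + 1 - 1)))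
      = fun n => (n ! : ℝ)⁻¹ * f n := by
    funext n
    push_cast [Nat.factorial_succ, Nat.add_sub_cancel]
    field_simp
  rw [← hasSum_nat_add_iff' 1, hshift]
  simp

section TraceExp

variable {𝔸 : Type*} [NormedRing 𝔸]

theorem norm_pow_mul_le (x y : 𝔸) (n : ℕ) : ‖x ^ n * y‖ ≤ ‖x‖ ^ n * ‖y‖ := by
  induction n with
  | zero => simp
  | succ n ih =>
    calc ‖x ^ (n + 1) * y‖ = ‖x * (x ^ n * y)‖ := by rw [pow_succ', mul_assoc]
      _ ≤ ‖x‖ * (‖x‖ ^ n * ‖y‖) := norm_mul_le_of_le le_rfl ih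
      _ = ‖x‖ ^ (n + 1) * ‖y‖ := by ring

variable [NormedAlgebra ℝ 𝔸] (L : 𝔸 →L[ℝ] ℝ)

theorem hasDerivAt_apply_add_smul_pow (hL : ∀ x y, L (x * y) = L (y * x))
    (A B : 𝔸) (n : ℕ) (s : ℝ) :
    HasDerivAt (fun t : ℝ => L ((A + t • B) ^ n)) (n * L ((A + s • B) ^ (n - 1) * B)) s := by
  have hline : HasDerivAt (fun t : ℝ => A + t • B) B s := by
    simpa using ((hasDerivAt_id s).smul_const B).const_add A
  have hpow : HasDerivAt (fun t : ℝ => (A + t • B) ^ n)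
      (∑ i ∈ Finset.range n, (A + s • B) ^ (n - 1 - i) * B * (A + s • B) ^ i) s := by
    simpa [smul_smul] using (hline.hasFDerivAt.fun_pow' n).hasDerivAt
  refine (L.hasFDerivAt.comp_hasDerivAt s hpow).congr_deriv ?_
  rw [map_sum]
  calc _ = ∑ i ∈ Finset.range n, L ((A + s • B) ^ (n - 1) * B) :=
        Finset.sum_congr rfl fun i hi => by
          rw [hL, ← mul_assoc, ← pow_add, Nat.add_sub_of_le (by grind)]
    _ = _ := by simp

theorem hasSum_apply_exp_mul [CompleteSpace 𝔸] (x y : 𝔸) :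
    HasSum (fun n => (n ! : ℝ)⁻¹ * L (x ^ n * y)) (L (NormedSpace.exp x * y)) := by
  simpa [smul_mul_assoc] using (L.comp ((ContinuousLinearMap.mul ℝ 𝔸).flip y)).hasSum
    (NormedSpace.exp_series_hasSum_exp' (𝕂 := ℝ) x)

theorem abs_apply_add_smul_pow_mul_le (A B : 𝔸) {s : ℝ} (hs : |s| ≤ 1) (n : ℕ) :
    |L ((A + s • B) ^ n * B)| ≤ ‖L‖ * ‖B‖ * (‖A‖ + ‖B‖) ^ n := by
  have hline : ‖A + s • B‖ ≤ ‖A‖ + ‖B‖ := by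
    calc ‖A + s • B‖ ≤ ‖A‖ + |s| * ‖B‖ := (norm_add_le _ _).trans_eq (by rw [norm_smul]; rfl)
      _ ≤ ‖A‖ + ‖B‖ := by gcongr; exact mul_le_of_le_one_left (norm_nonneg _) hs
  calc |L ((A + s • B) ^ n * B)| ≤ ‖L‖ * ‖(A + s • B) ^ n * B‖ := L.le_opNorm _
    _ ≤ ‖L‖ * (‖A + s • B‖ ^ n * ‖B‖) := by gcongr; exact norm_pow_mul_le _ _ _
    _ ≤ ‖L‖ * ((‖A‖ + ‖B‖) ^ n * ‖B‖) := by gcongr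
    _ = ‖L‖ * ‖B‖ * (‖A‖ + ‖B‖) ^ n := by ring

theorem hasDerivAt_apply_exp_add_smul [CompleteSpace 𝔸] (hL : ∀ x y, L (x * y) = L (y * x))
    (A B : 𝔸) :
    HasDerivAt (fun t : ℝ => L (NormedSpace.exp (A + t • B))) (L (NormedSpace.exp A * B)) 0 := by
  let bound (n : ℕ) : ℝ := (n ! : ℝ)⁻¹ * (n * (‖L‖ * ‖B‖ * (‖A‖ + ‖B‖) ^ (n - 1)))
  have hbound_summable : Summable bound := by
    have hexpR : HasSum (fun n => (n ! : ℝ)⁻¹ * (‖L‖ * ‖B‖ * (‖A‖ + ‖B‖) ^ n))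
        (‖L‖ * ‖B‖ * Real.exp (‖A‖ + ‖B‖)) := by
      simpa only [Real.exp_eq_exp_ℝ, smul_eq_mul, mul_left_comm] using
        (NormedSpace.exp_series_hasSum_exp' (𝕂 := ℝ) (‖A‖ + ‖B‖)).mul_left (‖L‖ * ‖B‖)
    exact (hasSum_inv_factorial_mul_nat_mul_iff.mpr hexpR).summable
  have hderiv_le (n : ℕ) (s : ℝ) (hs : s ∈ Metric.ball (0 : ℝ) 1) :
      ‖(n ! : ℝ)⁻¹ * (n * L ((A + s • B) ^ (n - 1) * B))‖ ≤ bound n := by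
    rw [Metric.mem_ball, dist_zero_right, Real.norm_eq_abs] at hs
    simp only [bound, norm_mul, norm_inv, Real.norm_eq_abs, Nat.abs_cast]
    gcongr
    exact abs_apply_add_smul_pow_mul_le L A B hs.le _
  have hexp (t : ℝ) : HasSum (fun n => (n ! : ℝ)⁻¹ * L ((A + t • B) ^ n))
      (L (NormedSpace.exp (A + t • B))) := by
    simpa using hasSum_apply_exp_mul L (A + t • B) 1
  have hderiv := hasDerivAt_tsum_of_isPreconnected hbound_summable Metric.isOpen_ball
    (convex_ball (0 : ℝ) 1).isPreconnected
    (fun n s _ => (hasDerivAt_apply_add_smul_pow L hL A B n s).const_mul (n ! : ℝ)⁻¹) hderiv_le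
    (Metric.mem_ball_self one_pos) (hexp 0).summable (Metric.mem_ball_self one_pos)
  have hvalue : HasSum (fun n => (n ! : ℝ)⁻¹ * (n * L ((A + (0 : ℝ) • B) ^ (n - 1) * B)))
      (L (NormedSpace.exp A * B)) := by
    simpa using hasSum_inv_factorial_mul_nat_mul_iff.mpr (hasSum_apply_exp_mul L A B)
  simpa only [(hexp _).tsum_eq, hvalue.tsum_eq] using hderiv

end TraceExp

theorem Matrix.hadamard_add_single_self {n R : Type*} [DecidableEq n] [CommRing R]
    (W : Matrix n n R) (i j : n) (c : R) :
    (W + single i j c) ⊙ (W + single i j c) = W ⊙ W + single i j (2 * W i j * c + c ^ 2) := by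
  ext a b
  by_cases h : i = a ∧ j = b
  · obtain ⟨rfl, rfl⟩ := h
    simp only [hadamard_apply, add_apply, single_apply_same]
    ring
  · simp [h]

theorem Matrix.hasDerivAt_trace_exp_add_smul {n : Type*} [Fintype n] [DecidableEq n]
    (A B : Matrix n n ℝ) :
    HasDerivAt (fun t : ℝ => (NormedSpace.exp (A + t • B)).trace)
      (NormedSpace.exp A * B).trace 0 := by
  -- Any submultiplicative norm will do: its topology is the product topology used by `exp`.
  let := Matrix.linftyOpNormedRing (n := n) (α := ℝ)
  let := Matrix.linftyOpNormedAlgebra (n := n) (α := ℝ) (R := ℝ)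
  exact hasDerivAt_apply_exp_add_smul (traceLinearMap n ℝ ℝ).toContinuousLinearMap
    trace_mul_comm A B

/-- Entrywise, `∂h/∂W_{ij} = 2 W_{ij} (e^{W∘W})_{ji}`, i.e. the gradient of
`h(W) = tr(e^{W∘W}) − d` is `(e^{W∘W})ᵀ ∘ (2W)`. -/
theorem gradient_of_notears_penalty {d : ℕ} (W : Matrix (Fin d) (Fin d) ℝ)
    (i j : Fin d) :
    HasDerivAt (fun t : ℝ => hAcy (W + t • Matrix.single i j 1))
      (((NormedSpace.exp (W ⊙ W))ᵀ ⊙ ((2 : ℝ) • W)) i j) 0 := by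
  have hsquare : HasDerivAt (fun t : ℝ => 2 * W i j * t + t ^ 2) (2 * W i j) 0 :=
    (((hasDerivAt_id (0 : ℝ)).const_mul (2 * W i j)).add (hasDerivAt_pow 2 (0 : ℝ))).congr_deriv
      (by simp)
  have htrace := ((hasDerivAt_trace_exp_add_smul (W ⊙ W) (single i j 1)).comp_of_eq 0 hsquare
    (by simp)).sub_const (d : ℝ)
  have hpenalty (t : ℝ) : hAcy (W + t • single i j 1)
      = (NormedSpace.exp (W ⊙ W + (2 * W i j * t + t ^ 2) • single i j 1)).trace - d := by
    simp only [hAcy, smul_single, smul_eq_mul, mul_one, hadamard_add_single_self]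
  simp_rw [hpenalty]
  refine htrace.congr_deriv ?_
  simp [trace_mul_single, mul_comm]
end

section
/- Let A ∈ ℝ^{d×d} be nonnegative with tr(e^A) = d. Then the (i,j) entry of A being positive implies the (j,i) entry of A is zero, for all i ≠ j, and all diagonal entries of A are zero. -/
open Matrix

theorem no_two_cycles_and_no_self_loops {d : ℕ} (A : Matrix (Fin d) (Fin d) ℝ)
    (hA : ∀ i j, 0 ≤ A i j) (h : (NormedSpace.exp A).trace = d) :
    (∀ i j : Fin d, i ≠ j → 0 < A i j → A j i = 0) ∧ (∀ i, A i i = 0) := by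
  letI : SeminormedRing (Matrix (Fin d) (Fin d) ℝ) := Matrix.linftyOpSemiNormedRing
  letI : NormedRing (Matrix (Fin d) (Fin d) ℝ) := Matrix.linftyOpNormedRing
  letI : NormedAlgebra ℝ (Matrix (Fin d) (Fin d) ℝ) := Matrix.linftyOpNormedAlgebra
  -- entries of powers are nonnegative
  have hpow : ∀ n : ℕ, ∀ i j, 0 ≤ (A ^ n) i j := by
    intro n
    induction n with
    | zero => intro i j; simp [Matrix.one_apply]; positivity
    | succ n ih =>
      intro i j
      rw [pow_succ, Matrix.mul_apply]
      exact Finset.sum_nonneg fun k _ => mul_nonneg (ih i k) (hA k j)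
  set f : ℕ → ℝ := fun n => (n.factorial : ℝ)⁻¹ * (A ^ n).trace with hf
  have hfnonneg : ∀ n, 0 ≤ f n := by
    intro n
    exact mul_nonneg (by positivity) (Finset.sum_nonneg fun i _ => hpow n i i)
  -- trace of exp is the tsum of f
  have hsum : Summable fun n : ℕ => ((n.factorial : ℝ))⁻¹ • A ^ n :=
    NormedSpace.expSeries_summable' A
  let T : Matrix (Fin d) (Fin d) ℝ →L[ℝ] ℝ :=
    LinearMap.toContinuousLinearMap (Matrix.traceLinearMap (Fin d) ℝ ℝ)
  have hTA : ∀ M : Matrix (Fin d) (Fin d) ℝ, T M = M.trace := fun _ => rfl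
  have htr : (NormedSpace.exp A).trace = ∑' n : ℕ, f n := by
    rw [NormedSpace.exp_eq_tsum (𝕂 := ℝ), ← hTA, T.map_tsum hsum]
    refine tsum_congr fun n => ?_
    simp [hTA, f, Matrix.trace_smul, smul_eq_mul]
  have hsumf : Summable f := by
    have h1 := hsum.map T T.continuous
    refine h1.congr fun n => ?_
    simp [hTA, f, Matrix.trace_smul, smul_eq_mul]
  have hf0 : f 0 = d := by
    simp [f, Matrix.trace_one]
  have htail : ∑' n : ℕ, f (n + 1) = 0 := by
    have := (Summable.tsum_eq_zero_add hsumf)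
    rw [htr, this, hf0] at h
    linarith
  have hsumtail : Summable fun n => f (n + 1) := hsumf.comp_injective (add_left_injective 1)
  have hterm : ∀ n : ℕ, f (n + 1) = 0 := by
    intro n
    have hle : f (n + 1) ≤ ∑' m : ℕ, f (m + 1) :=
      Summable.le_tsum hsumtail n fun m _ => hfnonneg (m + 1)
    have := hfnonneg (n + 1)
    linarith [hle, htail]
  have htr1 : A.trace = 0 := by
    have := hterm 0
    simp [f] at this
    simpa using this
  have htr2 : (A * A).trace = 0 := by
    have := hterm 1
    simp [f, pow_succ] at this
    simpa [pow_two] using this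
  have hdiag : ∀ i, A i i = 0 := by
    intro i
    have := (Finset.sum_eq_zero_iff_of_nonneg (fun i _ => hA i i)).mp htr1 i (Finset.mem_univ i)
    exact this
  refine ⟨?_, hdiag⟩
  intro i j hij hpos
  have h2 : ∑ i, ∑ j, A i j * A j i = 0 := by
    simpa [Matrix.trace, Matrix.diag, Matrix.mul_apply] using htr2
  have hinner : ∀ i ∈ Finset.univ, (∑ j, A i j * A j i) = 0 :=
    (Finset.sum_eq_zero_iff_of_nonneg (fun i _ =>
      Finset.sum_nonneg fun j _ => mul_nonneg (hA i j) (hA j i))).mp h2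
  have hij0 : A i j * A j i = 0 :=
    (Finset.sum_eq_zero_iff_of_nonneg (fun j _ => mul_nonneg (hA i j) (hA j i))).mp
      (hinner i (Finset.mem_univ i)) j (Finset.mem_univ j)
  rcases mul_eq_zero.mp hij0 with h1 | h1
  · exact absurd h1 hpos.ne'
  · exact h1
end
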